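/- arXiv:2505.21229 — 2 statements merged into one kernel-verified Lean document; each statement's English description precedes it below -/
import Mathlib

section
/- With I(G,K) the CA-ML instance constructed from a bipartite graph G and integer K as described (the exact-maximal-matching construction), G has a maximal matching of size exactly K if and only if I(G,K) admits a student-complete pair-size-stable matching, and likewise if and only if I(G,K) admits a course-complete pair-size-stable matching. -/
open Finset

/-- An instance of the Course Allocation problem: students `S`, courses `C`,
mutual acceptability `acc`, strict preferences of students over (acceptable) courses
and of courses over (acceptable) students, positive credits, upper quotas and credit limits. -/
structure CA (S C : Type*) where
  acc : S → C → Prop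
  sPref : S → C → C → Prop
  cPref : C → S → S → Prop
  credits : C → ℚ
  quota : C → ℕ
  limit : S → ℚ
  credits_pos : ∀ c, 0 < credits c
  sPref_irrefl : ∀ s c, ¬ sPref s c c
  sPref_trans : ∀ s c₁ c₂ c₃, sPref s c₁ c₂ → sPref s c₂ c₃ → sPref s c₁ c₃
  sPref_total : ∀ s c₁ c₂, acc s c₁ → acc s c₂ → c₁ ≠ c₂ → sPref s c₁ c₂ ∨ sPref s c₂ c₁
  cPref_irrefl : ∀ c s, ¬ cPref c s s
  cPref_trans : ∀ c s₁ s₂ s₃, cPref c s₁ s₂ → cPref c s₂ s₃ → cPref c s₁ s₃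
  cPref_total : ∀ c s₁ s₂, acc s₁ c → acc s₂ c → s₁ ≠ s₂ → cPref c s₁ s₂ ∨ cPref c s₂ s₁

section CourseAllocation

variable {S C : Type*} [DecidableEq S] [DecidableEq C]

/-- The set `C_M(s)` of courses assigned to student `s` in assignment `M`. -/
def CM (M : Finset (S × C)) (s : S) : Finset C :=
  (M.filter fun p => p.1 = s).image Prod.snd

/-- The set `S_M(c)` of students assigned to course `c` in assignment `M`. -/
def SM (M : Finset (S × C)) (c : C) : Finset S :=
  (M.filter fun p => p.2 = c).image Prod.fst

/-- The total number of credits `O(D)` of a set of courses `D`. -/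
def CA.O (I : CA S C) (D : Finset C) : ℚ := ∑ c ∈ D, I.credits c

/-- `M` is a matching: all pairs acceptable, credit limits and upper quotas respected. -/
def CA.IsMatching (I : CA S C) (M : Finset (S × C)) : Prop :=
  (∀ p ∈ M, I.acc p.1 p.2) ∧
  (∀ s, I.O (CM M s) ≤ I.limit s) ∧
  (∀ c, (SM M c).card ≤ I.quota c)

/-- Feasibility of a matching with respect to families `F` of feasible course sets. -/
def Feasible (F : S → Set (Finset C)) (M : Finset (S × C)) : Prop :=
  ∀ s, CM M s ∈ F s

/-- `F` is a family of downward-feasible constraints: every feasible set consists of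
acceptable courses, and subsets of feasible sets are feasible. -/
def CA.DownwardFeasible (I : CA S C) (F : S → Set (Finset C)) : Prop :=
  (∀ s, ∀ D ∈ F s, ∀ c ∈ D, I.acc s c) ∧
  (∀ s, ∀ D ∈ F s, ∀ D' ⊆ D, D' ∈ F s)

/-- Absent downward-feasible constraints (every set of courses feasible). -/
def noF : S → Set (Finset C) := fun _ => Set.univ

/-- Condition (1) of all blocking definitions: course `c` is undersubscribed in `M`
or prefers `s` to one of its assigned students. -/
def CA.Wants (I : CA S C) (M : Finset (S × C)) (s : S) (c : C) : Prop :=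
  (SM M c).card < I.quota c ∨ ∃ s' ∈ SM M c, I.cPref c s s'

/-- `(s, c)` is a blocking pair of `M` (w.r.t. feasibility constraints `F`). -/
def CA.BlockingPair (I : CA S C) (F : S → Set (Finset C)) (M : Finset (S × C))
    (s : S) (c : C) : Prop :=
  I.acc s c ∧ (s, c) ∉ M ∧ I.Wants M s c ∧
  ∃ D ⊆ CM M s, (∀ c' ∈ D, I.sPref s c c') ∧
    I.O (CM M s) - I.O D + I.credits c ≤ I.limit s ∧
    (CM M s \ D) ∪ {c} ∈ F s

def CA.PairStable (I : CA S C) (F : S → Set (Finset C)) (M : Finset (S × C)) : Prop :=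
  ∀ s c, ¬ I.BlockingPair F M s c

/-- `(s, c)` is a size-blocking pair of `M`: like a blocking pair, but additionally
the dropped set `D` must satisfy `O(D) ≤ O(c)`. -/
def CA.SizeBlockingPair (I : CA S C) (F : S → Set (Finset C)) (M : Finset (S × C))
    (s : S) (c : C) : Prop :=
  I.acc s c ∧ (s, c) ∉ M ∧ I.Wants M s c ∧
  ∃ D ⊆ CM M s, (∀ c' ∈ D, I.sPref s c c') ∧ I.O D ≤ I.credits c ∧
    I.O (CM M s) - I.O D + I.credits c ≤ I.limit s ∧
    (CM M s \ D) ∪ {c} ∈ F s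

def CA.PairSizeStable (I : CA S C) (F : S → Set (Finset C)) (M : Finset (S × C)) : Prop :=
  ∀ s c, ¬ I.SizeBlockingPair F M s c

/-- `(s, B)` is a blocking coalition of `M`. -/
def CA.BlockingCoalition (I : CA S C) (F : S → Set (Finset C)) (M : Finset (S × C))
    (s : S) (B : Finset C) : Prop :=
  B.Nonempty ∧ (∀ c ∈ B, I.acc s c ∧ (s, c) ∉ M) ∧ (∀ c ∈ B, I.Wants M s c) ∧
  ∃ D ⊆ CM M s, (∀ c ∈ B, ∀ c' ∈ D, I.sPref s c c') ∧ I.O D ≤ I.O B ∧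
    I.O (CM M s) - I.O D + I.O B ≤ I.limit s ∧
    (CM M s \ D) ∪ B ∈ F s

def CA.CoalitionStable (I : CA S C) (F : S → Set (Finset C)) (M : Finset (S × C)) : Prop :=
  ∀ s B, ¬ I.BlockingCoalition F M s B

/-- `(s, B)` is a first-blocking coalition of `M`: as a blocking coalition, except that
`s` need only prefer her most-preferred course of `B` to her most-preferred course of `D`
(equivalently, some course of `B` is preferred to every course of `D`; vacuous if `D = ∅`). -/
def CA.FirstBlockingCoalition (I : CA S C) (F : S → Set (Finset C)) (M : Finset (S × C))
    (s : S) (B : Finset C) : Prop :=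
  B.Nonempty ∧ (∀ c ∈ B, I.acc s c ∧ (s, c) ∉ M) ∧ (∀ c ∈ B, I.Wants M s c) ∧
  ∃ D ⊆ CM M s, (∃ b ∈ B, ∀ c' ∈ D, I.sPref s b c') ∧ I.O D ≤ I.O B ∧
    I.O (CM M s) - I.O D + I.O B ≤ I.limit s ∧
    (CM M s \ D) ∪ B ∈ F s

def CA.FirstCoalitionStable (I : CA S C) (F : S → Set (Finset C)) (M : Finset (S × C)) : Prop :=
  ∀ s B, ¬ I.FirstBlockingCoalition F M s B

/-- Every course exactly fills its upper quota. -/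
def CA.CourseComplete (I : CA S C) (M : Finset (S × C)) : Prop :=
  ∀ c, (SM M c).card = I.quota c

/-- Every student takes as many credits as her credit limit. -/
def CA.StudentComplete (I : CA S C) (M : Finset (S × C)) : Prop :=
  ∀ s, I.O (CM M s) = I.limit s

/-- The size of a matching: total number of credits taken by all students. -/
def CA.size [Fintype S] (I : CA S C) (M : Finset (S × C)) : ℚ :=
  ∑ s : S, I.O (CM M s)

/-- `ml` is a master list of students for the instance `I`: a strict total order on
students with which every course's preferences are consistent. -/
def CA.MasterList (I : CA S C) (ml : S → S → Prop) : Prop :=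
  (∀ s, ¬ ml s s) ∧ (∀ s₁ s₂ s₃, ml s₁ s₂ → ml s₂ s₃ → ml s₁ s₃) ∧
  (∀ s₁ s₂, s₁ ≠ s₂ → ml s₁ s₂ ∨ ml s₂ s₁) ∧
  (∀ c s s', I.acc s c → I.acc s' c → (I.cPref c s s' ↔ ml s s'))

end CourseAllocation
/-- Builds a `CA` instance from rank functions (smaller rank = more preferred), with a fixed
injective tie-breaking that never fires when ranks are distinct on acceptable pairs. -/
def CA.ofRanks {S C : Type*} (acc : S → C → Prop) (srank : S → C → ℕ) (crank : C → S → ℕ)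
    (iS : S → ℕ) (iC : C → ℕ) (hiS : Function.Injective iS) (hiC : Function.Injective iC)
    (credits : C → ℚ) (quota : C → ℕ) (limit : S → ℚ) (hpos : ∀ c, 0 < credits c) :
    CA S C where
  acc := acc
  sPref s c c' := acc s c ∧ acc s c' ∧
    (srank s c < srank s c' ∨ (srank s c = srank s c' ∧ iC c < iC c'))
  cPref c s s' := acc s c ∧ acc s' c ∧
    (crank c s < crank c s' ∨ (crank c s = crank c s' ∧ iS s < iS s'))
  credits := credits
  quota := quota
  limit := limit
  credits_pos := hpos
  sPref_irrefl := by rintro s c ⟨-, -, h⟩; omega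
  sPref_trans := by rintro s c₁ c₂ c₃ ⟨h1, -, ha⟩ ⟨-, h2, hb⟩; exact ⟨h1, h2, by omega⟩
  sPref_total := by
    intro s c₁ c₂ h1 h2 hne
    have hi : iC c₁ ≠ iC c₂ := fun h => hne (hiC h)
    rcases Nat.lt_trichotomy (srank s c₁) (srank s c₂) with h | h | h
    · exact Or.inl ⟨h1, h2, Or.inl h⟩
    · rcases Nat.lt_or_ge (iC c₁) (iC c₂) with h' | h'
      · exact Or.inl ⟨h1, h2, Or.inr ⟨h, h'⟩⟩
      · exact Or.inr ⟨h2, h1, Or.inr ⟨h.symm, by omega⟩⟩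
    · exact Or.inr ⟨h2, h1, Or.inl h⟩
  cPref_irrefl := by rintro c s ⟨-, -, h⟩; omega
  cPref_trans := by rintro c s₁ s₂ s₃ ⟨h1, -, ha⟩ ⟨-, h2, hb⟩; exact ⟨h1, h2, by omega⟩
  cPref_total := by
    intro c s₁ s₂ h1 h2 hne
    have hi : iS s₁ ≠ iS s₂ := fun h => hne (hiS h)
    rcases Nat.lt_trichotomy (crank c s₁) (crank c s₂) with h | h | h
    · exact Or.inl ⟨h1, h2, Or.inl h⟩
    · rcases Nat.lt_or_ge (iS s₁) (iS s₂) with h' | h'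
      · exact Or.inl ⟨h1, h2, Or.inr ⟨h, h'⟩⟩
      · exact Or.inr ⟨h2, h1, Or.inr ⟨h.symm, by omega⟩⟩
    · exact Or.inr ⟨h2, h1, Or.inl h⟩
/-- A matching in the bipartite graph `G = (U, W, E)` where `U = Fin n1`, `W = Fin n2`
and each `w_i ∈ W` has exactly the two neighbours `nb1 i` and `nb2 i`: `f i` is the
`U`-vertex matched to `w_i` (if any); edges must exist and be pairwise disjoint. -/
def GMatching {n1 n2 : ℕ} (nb1 nb2 : Fin n2 → Fin n1)
    (f : Fin n2 → Option (Fin n1)) : Prop :=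
  (∀ i j, f i = some j → j = nb1 i ∨ j = nb2 i) ∧
  ∀ i i' j, f i = some j → f i' = some j → i = i'

/-- `f` is a maximal matching of `G`: no edge can be added, i.e. every unmatched
`w_i` has both of its neighbours matched. -/
def GMaximal {n1 n2 : ℕ} (nb1 nb2 : Fin n2 → Fin n1)
    (f : Fin n2 → Option (Fin n1)) : Prop :=
  GMatching nb1 nb2 f ∧
  ∀ i, f i = none → ∀ j, (j = nb1 i ∨ j = nb2 i) → ∃ i', f i' = some j

/-- The size (number of edges) of the graph matching `f`. -/
def GSize {n1 n2 : ℕ} (f : Fin n2 → Option (Fin n1)) : ℕ :=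
  (Finset.univ.filter fun i => f i ≠ none).card
/-- Students of the exact-maximal-matching instance `I17(G,K)`: `Sum.inl (i, t)` is
`s_i^{t+1}` (`t : Fin 3`), and `Sum.inr k` is the student `p_{k+1}` (`k : Fin (n1-K)`). -/
abbrev S17 (n1 n2 K : ℕ) := (Fin n2 × Fin 3) ⊕ Fin (n1 - K)

/-- Courses of `I17(G,K)`: `Sum.inl (i, r)` is `d_i^{r+1}` (`r : Fin 2`),
`Sum.inr (Sum.inl j)` is `c_j`, and `Sum.inr (Sum.inr v)` is `e_1`, `e_2`, `f`
for `v = 0, 1, 2` respectively. -/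
abbrev C17 (n1 n2 : ℕ) := (Fin n2 × Fin 2) ⊕ (Fin n1 ⊕ Fin 3)

/-- Acceptability in `I17(G,K)`, following the preference lists
`s_i^1 : c_{nb1 i} ≻ d_i^1 ≻ f`, `s_i^2 : c_{nb2 i} ≻ d_i^1 ≻ d_i^2 ≻ f`,
`s_i^3 : c_{nb1 i} ≻ c_{nb2 i} ≻ d_i^2 ≻ e_1 ≻ e_2`, `p_k : c_1 ≻ ⋯ ≻ c_{n1}`. -/
def acc17 {n1 n2 K : ℕ} (nb1 nb2 : Fin n2 → Fin n1) : S17 n1 n2 K → C17 n1 n2 → Prop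
  | .inl (i, t), .inl (i', r) =>
      i = i' ∧ (if t = 0 then r = 0 else if t = 1 then True else r = 1)
  | .inl (i, t), .inr (.inl j) =>
      if t = 0 then j = nb1 i
      else if t = 1 then j = nb2 i
      else j = nb1 i ∨ j = nb2 i
  | .inl (_, t), .inr (.inr v) => if t = 2 then v = 0 ∨ v = 1 else v = 2
  | .inr _, .inr (.inl _) => True
  | .inr _, _ => False

/-- Students' preference ranks in `I17(G,K)` (smaller = more preferred). -/
def srank17 {n1 n2 K : ℕ} (nb1 nb2 : Fin n2 → Fin n1) : S17 n1 n2 K → C17 n1 n2 → ℕ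
  | .inl (_, t), .inl (_, r) => if t = 2 then 2 else if r = 0 then 1 else 2
  | .inl (i, t), .inr (.inl j) => if t = 2 then (if j = nb1 i then 0 else 1) else 0
  | .inl (_, t), .inr (.inr v) =>
      if t = 2 then (if v = 0 then 3 else 4) else if t = 0 then 2 else 3
  | .inr _, .inr (.inl j) => j.val
  | .inr _, _ => 0

/-- The position of each student in the master list of students of `I17(G,K)`:
`s_1^1, s_1^2, …, s_{n2}^1, s_{n2}^2`, then `s_1^3, …, s_{n2}^3`, then
`p_1, …, p_{n1-K}`.  All courses rank their acceptable students accordingly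
(this also realises the master list of courses). -/
def mrank17 {n1 n2 K : ℕ} : S17 n1 n2 K → ℕ
  | .inl (i, t) =>
      if t = 0 then 2 * i.val
      else if t = 1 then 2 * i.val + 1
      else 2 * n2 + i.val
  | .inr k => 3 * n2 + k.val

/-- Credits in `I17(G,K)`: `d_i^1, d_i^2` have 2 credits, all other courses 1 credit. -/
def credits17 {n1 n2 : ℕ} : C17 n1 n2 → ℚ
  | .inl _ => 2
  | .inr _ => 1

/-- Upper quotas in `I17(G,K)`: every course has upper quota 1 except `e_1, e_2`
(quota `n2 - K`) and `f` (quota `K`). -/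
def quota17 {n1 n2 : ℕ} (K : ℕ) : C17 n1 n2 → ℕ
  | .inl _ => 1
  | .inr (.inl _) => 1
  | .inr (.inr v) => if v = 2 then K else n2 - K

/-- Credit limits in `I17(G,K)`: `s_i^1, s_i^2, s_i^3` have limit 2, the `p_k` limit 1. -/
def limit17 {n1 n2 K : ℕ} : S17 n1 n2 K → ℚ
  | .inl _ => 2
  | .inr _ => 1

/-- The CA-ML instance `I17(G,K)` (exact-maximal-matching construction) built from the
bipartite graph `G` (neighbour maps `nb1, nb2` of the degree-2 side `W = Fin n2`) and `K`. -/
def I17 {n1 n2 : ℕ} (nb1 nb2 : Fin n2 → Fin n1) (K : ℕ) :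
    CA (S17 n1 n2 K) (C17 n1 n2) :=
  CA.ofRanks (acc17 nb1 nb2) (srank17 nb1 nb2) (fun _ s => mrank17 s)
    Encodable.encode Encodable.encode Encodable.encode_injective Encodable.encode_injective
    credits17 (quota17 K) limit17
    (by
      rintro (⟨i, r⟩ | c)
      · show (0 : ℚ) < 2; norm_num
      · show (0 : ℚ) < 1; norm_num)

/-!
Each `w_i` becomes a gadget of three students and two 2-credit courses. In a complete matching
every gadget is in one of three states: `s_i^1` takes `c_j, f` for the first neighbour `u_j` of
`w_i` (and `s_i^2, s_i^3` take `d_i^1, d_i^2`); or `s_i^2` takes `c_k, f` for the second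
neighbour `u_k`; or `s_i^1, s_i^2` keep `d_i^1, d_i^2` and `s_i^3` has to take two of
`c_j, c_k, e_1, e_2`. The gadgets using `f` therefore form a matching of `G` with `q⁺(f) = K`
edges.
The remaining `n2 - K` students `s_i^3` fill the `n2 - K` seats of `e_1` and of `e_2`, so they
take exactly `e_1, e_2`, and the free courses `c_j` go to the students `p_k`. Pair-size-stability
then says precisely that the matching is maximal: if `w_i` is unmatched and its neighbour `u_j` is
free, then `c_j` is held by some `p_k`, and `(s_i^3, c_j)` size-blocks by giving up `e_2`.
Conversely, from a maximal matching of size `K` the matching in which the `p_k` take the free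
`c_j` in increasing order is pair-size-stable.
Student- and course-completeness are equivalent since total credit limit equals total capacity.
-/

namespace CA

section Credits

variable {S C : Type*} (I : CA S C)

@[simp]
lemma O_singleton (c : C) : I.O {c} = I.credits c := sum_singleton _ _

lemma O_pair [DecidableEq C] {c c' : C} (h : c ≠ c') : I.O {c, c'} = I.credits c + I.credits c' :=
  sum_pair h

lemma eq_of_subset_of_O_le {A B : Finset C} (h : A ⊆ B) (hO : I.O B ≤ I.O A) : A = B := by
  classical
  by_contra hne
  obtain ⟨c, hcB, hcA⟩ := exists_of_ssubset (ssubset_of_subset_of_ne h hne)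
  exact (sum_lt_sum_of_subset h hcB hcA (I.credits_pos c) fun c _ _ => (I.credits_pos c).le).not_ge
    hO

lemma eq_singleton_of_subset_of_O_eq {D : Finset C} {x y : C} (hD : D ⊆ {y})
    (hO : I.O D = I.credits x) : D = {y} := by
  refine (subset_singleton_iff.1 hD).resolve_left ?_
  rintro rfl
  exact (I.credits_pos x).ne' (by simpa [O] using hO.symm)

end Credits

section Ranks

variable {S C : Type*} {acc : S → C → Prop} {srank : S → C → ℕ} {crank : C → S → ℕ}
  {iS : S → ℕ} {iC : C → ℕ} {hiS : Function.Injective iS} {hiC : Function.Injective iC}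
  {credits : C → ℚ} {quota : C → ℕ} {limit : S → ℚ} {hpos : ∀ c, 0 < credits c}

lemma ofRanks_sPref_rank_le {s : S} {c c' : C}
    (h : (ofRanks acc srank crank iS iC hiS hiC credits quota limit hpos).sPref s c c') :
    srank s c ≤ srank s c' := by
  obtain ⟨-, -, h | h⟩ := h <;> omega

lemma ofRanks_cPref_rank_le {c : C} {s s' : S}
    (h : (ofRanks acc srank crank iS iC hiS hiC credits quota limit hpos).cPref c s s') :
    crank c s ≤ crank c s' := by
  obtain ⟨-, -, h | h⟩ := h <;> omega

end Ranks

end CA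

section Matchings

variable {S C : Type*} [DecidableEq S] [DecidableEq C] {M : Finset (S × C)}

@[simp]
lemma mem_CM {s : S} {c : C} : c ∈ CM M s ↔ (s, c) ∈ M := by
  simp [CM]

@[simp]
lemma mem_SM {s : S} {c : C} : s ∈ SM M c ↔ (s, c) ∈ M := by
  simp [SM]

namespace CA

variable {I : CA S C}

lemma IsMatching.eq_of_mem_of_quota_le_one {x : C} (hM : I.IsMatching M) (hx : I.quota x ≤ 1)
    {a b : S} (ha : (a, x) ∈ M) (hb : (b, x) ∈ M) : a = b :=
  card_le_one.1 ((hM.2.2 x).trans hx) a (mem_SM.2 ha) b (mem_SM.2 hb)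

lemma CourseComplete.exists_mem {x : C} (hCC : I.CourseComplete M) (hx : 0 < I.quota x) :
    ∃ a, (a, x) ∈ M := by
  obtain ⟨a, ha⟩ := card_pos.1 ((hCC x).symm ▸ hx)
  exact ⟨a, mem_SM.1 ha⟩

variable (I)

lemma sizeBlockingPair_noF_iff (hSC : I.StudentComplete M) (hCC : I.CourseComplete M) {s : S}
    {c : C} : I.SizeBlockingPair noF M s c ↔ I.acc s c ∧ (s, c) ∉ M ∧
      (∃ s' ∈ SM M c, I.cPref c s s') ∧
      ∃ D ⊆ CM M s, (∀ c' ∈ D, I.sPref s c c') ∧ I.O D = I.credits c := by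
  simp only [SizeBlockingPair, Wants, hSC s, hCC c, lt_irrefl, false_or, noF, Set.mem_univ,
    and_true]
  refine and_congr_right' <| and_congr_right' <| and_congr_right' <| exists_congr fun D => ?_
  refine and_congr_right' <| and_congr_right' ⟨fun h => le_antisymm h.1 ?_, fun h => ?_⟩
  · linarith [h.2]
  · exact ⟨h.le, by linarith⟩

variable [Fintype S] [Fintype C]

lemma sum_O_CM_eq_sum_card_SM_mul_credits (M : Finset (S × C)) :
    ∑ s, I.O (CM M s) = ∑ c, (SM M c).card * I.credits c := by
  have hCM (s : S) : I.O (CM M s) = ∑ q ∈ M with q.1 = s, I.credits q.2 :=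
    sum_image fun q hq q' hq' h => Prod.ext ((mem_filter.1 hq).2.trans (mem_filter.1 hq').2.symm) h
  have hSM (c : C) :
      ((SM M c).card : ℚ) * I.credits c = ∑ q ∈ M with q.2 = c, I.credits c := by
    rw [sum_const, nsmul_eq_mul, SM, card_image_of_injOn fun q hq q' hq' h =>
      Prod.ext h ((mem_filter.1 hq).2.trans (mem_filter.1 hq').2.symm)]
  simp_rw [hCM, hSM, sum_fiberwise, sum_fiberwise']

lemma studentComplete_iff_courseComplete
    (hsum : ∑ s, I.limit s = ∑ c, (I.quota c : ℚ) * I.credits c) (hM : I.IsMatching M) :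
    I.StudentComplete M ↔ I.CourseComplete M := by
  have hcount := I.sum_O_CM_eq_sum_card_SM_mul_credits M
  have hS : ∀ s ∈ univ, I.O (CM M s) ≤ I.limit s := fun s _ => hM.2.1 s
  have hC : ∀ c ∈ univ, ((SM M c).card : ℚ) * I.credits c ≤ I.quota c * I.credits c :=
    fun c _ => mul_le_mul_of_nonneg_right (by exact_mod_cast hM.2.2 c) (I.credits_pos c).le
  constructor
  · intro h c
    have := (sum_eq_sum_iff_of_le hC).1 (by rw [← hcount, ← hsum, sum_congr rfl fun s _ => h s])
      c (mem_univ c)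
    exact_mod_cast mul_right_cancel₀ (I.credits_pos c).ne' this
  · intro h s
    exact (sum_eq_sum_iff_of_le hS).1 (by rw [hcount, hsum, sum_congr rfl fun c _ => by rw [h c]])
      s (mem_univ s)

lemma courseComplete_of_quota_le_card
    (hsum : ∑ s, I.limit s = ∑ c, (I.quota c : ℚ) * I.credits c) (hSC : I.StudentComplete M)
    (hquota : ∀ c, I.quota c ≤ (SM M c).card) : I.CourseComplete M := by
  have hle : ∀ c ∈ univ, (I.quota c : ℚ) * I.credits c ≤ (SM M c).card * I.credits c :=
    fun c _ => mul_le_mul_of_nonneg_right (by exact_mod_cast hquota c) (I.credits_pos c).le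
  have heq := (sum_eq_sum_iff_of_le hle).1 (by
    rw [← I.sum_O_CM_eq_sum_card_SM_mul_credits, ← hsum, sum_congr rfl fun s _ => hSC s])
  intro c
  exact_mod_cast (mul_right_cancel₀ (I.credits_pos c).ne' (heq c (mem_univ c))).symm

end CA

end Matchings

section GraphMatchings

variable {n1 n2 : ℕ}

lemma card_filter_eq_none (m : Fin n2 → Option (Fin n1)) :
    #(univ.filter fun i => m i = none) = n2 - GSize m := by
  have := card_filter_add_card_filter_not (s := univ) (fun i => m i = none)
  simp only [card_univ, Fintype.card_fin] at this
  rw [GSize]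
  simp only [ne_eq]
  omega

lemma card_filter_exists_eq_some {m : Fin n2 → Option (Fin n1)}
    (hinj : ∀ i i' j, m i = some j → m i' = some j → i = i') :
    #(univ.filter fun j : Fin n1 => ∃ i, m i = some j) = GSize m := by
  rw [GSize, ← card_map ⟨some, Option.some_injective _⟩, ← card_image_of_injOn (f := m)]
  · congr 1
    ext (_ | j) <;> simp [eq_comm]
    exact exists_congr fun i => ⟨fun h => ⟨by simp [h], h⟩, And.right⟩
  · intro i hi i' _ h
    obtain ⟨j, hj⟩ := Option.ne_none_iff_exists'.1 (mem_filter.1 hi).2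
    exact hinj i i' j hj (h ▸ hj)

end GraphMatchings

namespace I17

variable {n1 n2 K : ℕ}

-- Indices are 0-based: `s i t` is the student `s_i^{t+1}` and `d i r` the course `d_i^{r+1}`.
abbrev s (i : Fin n2) (t : Fin 3) : S17 n1 n2 K := .inl (i, t)
abbrev p (k : Fin (n1 - K)) : S17 n1 n2 K := .inr k
abbrev d (i : Fin n2) (r : Fin 2) : C17 n1 n2 := .inl (i, r)
abbrev c (j : Fin n1) : C17 n1 n2 := .inr (.inl j)
abbrev e₁ : C17 n1 n2 := .inr (.inr 0)
abbrev e₂ : C17 n1 n2 := .inr (.inr 1)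
abbrev f : C17 n1 n2 := .inr (.inr 2)

variable {nb1 nb2 : Fin n2 → Fin n1} {i : Fin n2} {x : C17 n1 n2} {a : S17 n1 n2 K}

lemma acc_s0 : acc17 nb1 nb2 (s i 0 : S17 n1 n2 K) x ↔ x = d i 0 ∨ x = c (nb1 i) ∨ x = f := by
  rcases x with ⟨i', r⟩ | j | v <;> (try fin_cases r) <;> (try fin_cases v) <;>
    simp [acc17, eq_comm]

lemma acc_s1 : acc17 nb1 nb2 (s i 1 : S17 n1 n2 K) x ↔
    x = d i 0 ∨ x = d i 1 ∨ x = c (nb2 i) ∨ x = f := by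
  rcases x with ⟨i', r⟩ | j | v <;> (try fin_cases r) <;> (try fin_cases v) <;>
    simp [acc17, eq_comm]

lemma acc_s2 : acc17 nb1 nb2 (s i 2 : S17 n1 n2 K) x ↔
    x = d i 1 ∨ x = c (nb1 i) ∨ x = c (nb2 i) ∨ x = e₁ ∨ x = e₂ := by
  rcases x with ⟨i', r⟩ | j | v <;> (try fin_cases r) <;> (try fin_cases v) <;>
    simp [acc17, eq_comm]

lemma acc_p {k : Fin (n1 - K)} : acc17 nb1 nb2 (p k : S17 n1 n2 K) x ↔ ∃ j, x = c j := by
  rcases x with ⟨i', r⟩ | j | v <;> simp [acc17]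

lemma acc_d0 : acc17 nb1 nb2 a (d i 0) ↔ a = s i 0 ∨ a = s i 1 := by
  rcases a with ⟨i', t⟩ | k <;> (try fin_cases t) <;> simp [acc17, eq_comm]

lemma acc_d1 : acc17 nb1 nb2 a (d i 1) ↔ a = s i 1 ∨ a = s i 2 := by
  rcases a with ⟨i', t⟩ | k <;> (try fin_cases t) <;> simp [acc17, eq_comm]

lemma acc_c {j : Fin n1} : acc17 nb1 nb2 a (c j) ↔
    (∃ i, a = s i 0 ∧ j = nb1 i) ∨ (∃ i, a = s i 1 ∧ j = nb2 i) ∨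
      (∃ i, a = s i 2 ∧ (j = nb1 i ∨ j = nb2 i)) ∨ ∃ k, a = p k := by
  rcases a with ⟨i', t⟩ | k <;> (try fin_cases t) <;> simp [acc17]

lemma acc_e₁ : acc17 nb1 nb2 a e₁ ↔ ∃ i, a = s i 2 := by
  rcases a with ⟨i', t⟩ | k <;> (try fin_cases t) <;> simp [acc17]

lemma acc_e₂ : acc17 nb1 nb2 a e₂ ↔ ∃ i, a = s i 2 := by
  rcases a with ⟨i', t⟩ | k <;> (try fin_cases t) <;> simp [acc17]

lemma acc_f : acc17 nb1 nb2 a f ↔ ∃ i, a = s i 0 ∨ a = s i 1 := by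
  rcases a with ⟨i', t⟩ | k <;> (try fin_cases t) <;> simp [acc17]

@[simp] lemma credits_d (r : Fin 2) : (I17 nb1 nb2 K).credits (d i r) = 2 := rfl
@[simp] lemma credits_inr (y : Fin n1 ⊕ Fin 3) : (I17 nb1 nb2 K).credits (.inr y) = 1 := rfl
@[simp] lemma quota_d (r : Fin 2) : (I17 nb1 nb2 K).quota (d i r) = 1 := rfl
@[simp] lemma quota_c (j : Fin n1) : (I17 nb1 nb2 K).quota (c j) = 1 := rfl
@[simp] lemma quota_e₁ : (I17 nb1 nb2 K).quota e₁ = n2 - K := rfl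
@[simp] lemma quota_e₂ : (I17 nb1 nb2 K).quota e₂ = n2 - K := rfl
@[simp] lemma quota_f : (I17 nb1 nb2 K).quota f = K := rfl
@[simp] lemma limit_s (t : Fin 3) : (I17 nb1 nb2 K).limit (s i t) = 2 := rfl
@[simp] lemma limit_p (k : Fin (n1 - K)) : (I17 nb1 nb2 K).limit (p k) = 1 := rfl

@[simp] lemma O_c_f (j : Fin n1) : (I17 nb1 nb2 K).O {c j, f} = 2 := by
  rw [CA.O_pair _ (by simp)]; norm_num

@[simp] lemma O_e₁_e₂ : (I17 nb1 nb2 K).O {e₁, e₂} = 2 := by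
  rw [CA.O_pair _ (by simp)]; norm_num

lemma sum_limit_eq_sum_quota_mul_credits (hK1 : K ≤ n1) (hK2 : K ≤ n2) :
    ∑ a, (I17 nb1 nb2 K).limit a =
      ∑ x, ((I17 nb1 nb2 K).quota x : ℚ) * (I17 nb1 nb2 K).credits x := by
  simp only [Fintype.sum_sum_type, Fintype.sum_prod_type]
  simp [Fin.sum_univ_three, Nat.cast_sub hK1, Nat.cast_sub hK2]
  ring

lemma mrank_s_lt_of_ne_two {t : Fin 3} (ht : t ≠ 2) :
    mrank17 (s i t : S17 n1 n2 K) < 2 * n2 := by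
  have := i.isLt
  fin_cases t
  · show 2 * (i : ℕ) < 2 * n2; omega
  · show 2 * (i : ℕ) + 1 < 2 * n2; omega
  · exact absurd rfl ht

lemma mrank_s_two : mrank17 (s i 2 : S17 n1 n2 K) = 2 * n2 + i := rfl

lemma mrank_p (k : Fin (n1 - K)) : mrank17 (p k : S17 n1 n2 K) = 3 * n2 + k := rfl

section Forward

variable {m : Fin n2 → Option (Fin n1)} {g : Fin (n1 - K) → Fin n1}

variable (nb1 m g) in
def caCourses : S17 n1 n2 K → Finset (C17 n1 n2)
  | .inl (i, 0) => if m i = some (nb1 i) then {c (nb1 i), f} else {d i 0}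
  | .inl (i, 1) => match m i with
    | none => {d i 1}
    | some j => if j = nb1 i then {d i 0} else {c j, f}
  | .inl (i, 2) => if m i = none then {e₁, e₂} else {d i 1}
  | .inr k => {c (g k)}

variable (nb1 m g) in
def caMatching : Finset (S17 n1 n2 K × C17 n1 n2) :=
  univ.filter fun q => q.2 ∈ caCourses nb1 m g q.1

@[simp]
lemma mem_caMatching : (a, x) ∈ caMatching nb1 m g ↔ x ∈ caCourses nb1 m g a := by
  simp [caMatching]

lemma CM_caMatching : CM (caMatching nb1 m g) a = caCourses nb1 m g a := by
  ext; simp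

lemma studentComplete_caMatching :
    (I17 nb1 nb2 K).StudentComplete (caMatching nb1 m g) := by
  rintro (⟨i, t⟩ | k) <;> rw [CM_caMatching]
  · fin_cases t <;> rcases h : m i with _ | j <;> simp only [caCourses, h] <;>
      (try split_ifs) <;> simp
  · simp [caCourses]

lemma acc_of_mem_caCourses (hedge : ∀ i j, m i = some j → j = nb1 i ∨ j = nb2 i)
    (hx : x ∈ caCourses nb1 m g a) : acc17 nb1 nb2 a x := by
  rcases a with ⟨i, t⟩ | k
  · fin_cases t <;> rcases h : m i with _ | j <;> simp only [caCourses, h] at hx <;>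
      (try split_ifs at hx with hj) <;> simp at hx <;> rcases hx with rfl | rfl <;>
      simp [acc_s0, acc_s1, acc_s2]
    exact (hedge i j h).resolve_left hj
  · simp [caCourses] at hx
    simp [hx, acc_p]

lemma le_card_SM_e_caMatching (hsize : GSize m = K) (hx : x = e₁ ∨ x = e₂) :
    n2 - K ≤ #(SM (caMatching nb1 m g) x) :=
  calc n2 - K = #((univ.filter fun i => m i = none).image fun i => s i 2) := by
        rw [card_image_of_injective _ fun i i' h => by simpa using h, card_filter_eq_none, hsize]
    _ ≤ #(SM (caMatching nb1 m g) x) := card_le_card fun a ha => by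
        obtain ⟨i, hi, rfl⟩ := mem_image.1 ha
        rcases hx with rfl | rfl <;> simp_all [caCourses]

lemma le_card_SM_f_caMatching (hsize : GSize m = K) : K ≤ #(SM (caMatching nb1 m g) f) :=
  calc K = #((univ.filter fun i => m i ≠ none).image
          fun i => s i (if m i = some (nb1 i) then 0 else 1)) := by
        rw [card_image_of_injective _ fun i i' h => (Prod.ext_iff.1 (Sum.inl_injective h)).1,
          ← hsize, GSize]
    _ ≤ _ := card_le_card fun a ha => by
        obtain ⟨i, hi, rfl⟩ := mem_image.1 ha
        obtain ⟨j, h⟩ := Option.ne_none_iff_exists'.1 (mem_filter.1 hi).2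
        by_cases h1 : j = nb1 i
        · subst h1
          simp [caCourses, h]
        · simp [caCourses, h, h1]

lemma quota_le_card_SM_caMatching (hsize : GSize m = K)
    (hrange : ∀ j, j ∈ Set.range g ↔ ¬ ∃ i, m i = some j) (x : C17 n1 n2) :
    (I17 nb1 nb2 K).quota x ≤ #(SM (caMatching nb1 m g) x) := by
  rcases x with ⟨i, r⟩ | j | v
  · refine one_le_card.2 ?_
    fin_cases r
    · by_cases h : m i = some (nb1 i)
      · exact ⟨s i 1, by simp [caCourses, h]⟩
      · exact ⟨s i 0, by simp [caCourses, h]⟩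
    · rcases h : m i with _ | j
      · exact ⟨s i 1, by simp [caCourses, h]⟩
      · exact ⟨s i 2, by simp [caCourses, h]⟩
  · refine one_le_card.2 ?_
    by_cases hj : ∃ i, m i = some j
    · obtain ⟨i, h⟩ := hj
      by_cases h1 : j = nb1 i
      · subst h1
        exact ⟨s i 0, by simp [caCourses, h]⟩
      · exact ⟨s i 1, by simp [caCourses, h, h1]⟩
    · obtain ⟨k, hk⟩ := (hrange j).2 hj
      exact ⟨p k, by simp [caCourses, hk]⟩
  · fin_cases v
    · exact le_card_SM_e_caMatching hsize (.inl rfl)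
    · exact le_card_SM_e_caMatching hsize (.inr rfl)
    · exact le_card_SM_f_caMatching hsize

lemma courseComplete_caMatching (hK1 : K ≤ n1) (hK2 : K ≤ n2) (hsize : GSize m = K)
    (hrange : ∀ j, j ∈ Set.range g ↔ ¬ ∃ i, m i = some j) :
    (I17 nb1 nb2 K).CourseComplete (caMatching nb1 m g) :=
  (I17 nb1 nb2 K).courseComplete_of_quota_le_card (sum_limit_eq_sum_quota_mul_credits hK1 hK2)
    studentComplete_caMatching (quota_le_card_SM_caMatching hsize hrange)

lemma isMatching_caMatching (hedge : ∀ i j, m i = some j → j = nb1 i ∨ j = nb2 i)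
    (hCC : (I17 nb1 nb2 K).CourseComplete (caMatching nb1 m g)) :
    (I17 nb1 nb2 K).IsMatching (caMatching nb1 m g) :=
  ⟨fun _ hq => acc_of_mem_caCourses hedge (mem_caMatching.1 hq),
    fun a => (studentComplete_caMatching a).le, fun x => (hCC x).le⟩

lemma mrank_lt_or_of_c_mem_caCourses {j : Fin n1} (h : c j ∈ caCourses nb1 m g a) :
    mrank17 a < 2 * n2 ∨ ∃ k, a = p k ∧ g k = j := by
  rcases a with ⟨i, t⟩ | k
  · by_cases ht : t = 2
    · subst ht
      simp only [caCourses] at h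
      split_ifs at h <;> simp at h
    · exact .inl (mrank_s_lt_of_ne_two ht)
  · simp only [caCourses, mem_singleton, Sum.inr.injEq, Sum.inl.injEq] at h
    exact .inr ⟨k, rfl, h.symm⟩

lemma of_sizeBlockingPair_caMatching (hCC : (I17 nb1 nb2 K).CourseComplete (caMatching nb1 m g))
    (h : (I17 nb1 nb2 K).SizeBlockingPair noF (caMatching nb1 m g) a x) :
    acc17 nb1 nb2 a x ∧ x ∉ caCourses nb1 m g a ∧
      (∃ b, x ∈ caCourses nb1 m g b ∧ mrank17 a ≤ mrank17 b) ∧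
      ∃ D ⊆ caCourses nb1 m g a, (∀ y ∈ D, srank17 nb1 nb2 a x ≤ srank17 nb1 nb2 a y) ∧
        (I17 nb1 nb2 K).O D = (I17 nb1 nb2 K).credits x := by
  obtain ⟨hacc, hx, ⟨b, hb, hba⟩, D, hD, hDx, hOD⟩ :=
    ((I17 nb1 nb2 K).sizeBlockingPair_noF_iff studentComplete_caMatching hCC).1 h
  rw [mem_caMatching] at hx
  rw [mem_SM, mem_caMatching] at hb
  rw [CM_caMatching] at hD
  exact ⟨hacc, hx, ⟨b, hb, CA.ofRanks_cPref_rank_le hba⟩, D, hD,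
    fun y hy => CA.ofRanks_sPref_rank_le (hDx y hy), hOD⟩

lemma not_sizeBlockingPair_s0 (hCC : (I17 nb1 nb2 K).CourseComplete (caMatching nb1 m g)) :
    ¬ (I17 nb1 nb2 K).SizeBlockingPair noF (caMatching nb1 m g) (s i 0) x := by
  intro h
  obtain ⟨hacc, hx, -, D, hD, hDx, hOD⟩ := of_sizeBlockingPair_caMatching hCC h
  by_cases hmi : m i = some (nb1 i)
  · simp only [caCourses, hmi, if_true] at hx hD
    rcases acc_s0.1 hacc with rfl | rfl | rfl
    · have hDeq := (I17 nb1 nb2 K).eq_of_subset_of_O_le hD (by simp [hOD])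
      have := hDx (c (nb1 i)) (by simp [hDeq])
      simp [srank17] at this
    all_goals simp at hx
  · simp only [caCourses, hmi, if_false] at hx hD
    rw [(I17 nb1 nb2 K).eq_singleton_of_subset_of_O_eq hD hOD, CA.O_singleton] at hOD
    rcases acc_s0.1 hacc with rfl | rfl | rfl
    · simp at hx
    all_goals norm_num at hOD

lemma not_sizeBlockingPair_s1 (hedge : ∀ i j, m i = some j → j = nb1 i ∨ j = nb2 i)
    (hCC : (I17 nb1 nb2 K).CourseComplete (caMatching nb1 m g)) :
    ¬ (I17 nb1 nb2 K).SizeBlockingPair noF (caMatching nb1 m g) (s i 1) x := by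
  intro h
  obtain ⟨hacc, hx, ⟨b, hb, hrank⟩, D, hD, hDx, hOD⟩ := of_sizeBlockingPair_caMatching hCC h
  rcases hmi : m i with _ | j
  · simp only [caCourses, hmi] at hx hD
    rw [(I17 nb1 nb2 K).eq_singleton_of_subset_of_O_eq hD hOD, CA.O_singleton] at hOD
    rcases acc_s1.1 hacc with rfl | rfl | rfl | rfl
    · -- `d i 0` is held by `s i 0`, who is ahead of `s i 1`
      rcases acc_d0.1 (acc_of_mem_caCourses hedge hb) with rfl | rfl
      · simp [mrank17] at hrank
      · simp [caCourses, hmi] at hb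
    · simp at hx
    all_goals norm_num at hOD
  · by_cases hj : j = nb1 i
    · subst hj
      simp only [caCourses, hmi, if_true] at hx hD
      have hDeq := (I17 nb1 nb2 K).eq_singleton_of_subset_of_O_eq hD hOD
      rw [hDeq, CA.O_singleton] at hOD
      rcases acc_s1.1 hacc with rfl | rfl | rfl | rfl
      · simp at hx
      · have := hDx (d i 0) (by simp [hDeq])
        simp [srank17] at this
      all_goals norm_num at hOD
    · simp only [caCourses, hmi, hj, if_false] at hx hD
      obtain rfl := (hedge i j hmi).resolve_left hj
      rcases acc_s1.1 hacc with rfl | rfl | rfl | rfl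
      iterate 2
        have hDeq := (I17 nb1 nb2 K).eq_of_subset_of_O_le hD (by simp [hOD])
        have := hDx (c (nb2 i)) (by simp [hDeq])
        simp [srank17] at this
      all_goals simp at hx

lemma not_sizeBlockingPair_s2 (hm : GMaximal nb1 nb2 m)
    (hrange : ∀ j, j ∈ Set.range g ↔ ¬ ∃ i, m i = some j)
    (hCC : (I17 nb1 nb2 K).CourseComplete (caMatching nb1 m g)) :
    ¬ (I17 nb1 nb2 K).SizeBlockingPair noF (caMatching nb1 m g) (s i 2) x := by
  intro h
  obtain ⟨hacc, hx, ⟨b, hb, hrank⟩, D, hD, hDx, hOD⟩ := of_sizeBlockingPair_caMatching hCC h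
  rw [mrank_s_two] at hrank
  have hi := i.isLt
  by_cases hmi : m i = none
  · simp only [caCourses, hmi, if_true] at hx
    -- by maximality `c j` is matched in `G`, so its occupant is an `s i' 0` or `s i' 1`
    have hc (j : Fin n1) (hj : j = nb1 i ∨ j = nb2 i) (hb : c j ∈ caCourses nb1 m g b) :
        False := by
      obtain ⟨i', hi'⟩ := hm.2 i hmi j hj
      rcases mrank_lt_or_of_c_mem_caCourses hb with hlt | ⟨k, rfl, hk⟩
      · omega
      · exact (hrange j).1 ⟨k, hk⟩ ⟨i', hi'⟩
    rcases acc_s2.1 hacc with rfl | rfl | rfl | rfl | rfl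
    · rcases acc_d1.1 (acc_of_mem_caCourses hm.1.1 hb) with rfl | rfl
      · simp [mrank17] at hrank
        omega
      · simp [caCourses, hmi] at hb
    · exact hc _ (.inl rfl) hb
    · exact hc _ (.inr rfl) hb
    all_goals simp at hx
  · simp only [caCourses, hmi, if_false] at hx hD
    rw [(I17 nb1 nb2 K).eq_singleton_of_subset_of_O_eq hD hOD, CA.O_singleton] at hOD
    rcases acc_s2.1 hacc with rfl | rfl | rfl | rfl | rfl
    · simp at hx
    all_goals norm_num at hOD

lemma not_sizeBlockingPair_p (hg : StrictMono g) {k : Fin (n1 - K)}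
    (hCC : (I17 nb1 nb2 K).CourseComplete (caMatching nb1 m g)) :
    ¬ (I17 nb1 nb2 K).SizeBlockingPair noF (caMatching nb1 m g) (p k) x := by
  intro h
  obtain ⟨hacc, hx, ⟨b, hb, hrank⟩, D, hD, hDx, hOD⟩ := of_sizeBlockingPair_caMatching hCC h
  obtain ⟨j, rfl⟩ := acc_p.1 hacc
  simp only [caCourses] at hx hD
  have hDeq := (I17 nb1 nb2 K).eq_singleton_of_subset_of_O_eq hD hOD
  have hjk : j < g k :=
    lt_of_le_of_ne (by simpa [srank17] using hDx (c (g k)) (by simp [hDeq])) (by simpa using hx)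
  rw [mrank_p] at hrank
  rcases mrank_lt_or_of_c_mem_caCourses hb with hlt | ⟨k', rfl, rfl⟩
  · omega
  · rw [mrank_p] at hrank
    exact (hg.le_iff_le.2 (by omega : k ≤ k')).not_gt hjk

theorem pairSizeStable_caMatching (hm : GMaximal nb1 nb2 m) (hg : StrictMono g)
    (hrange : ∀ j, j ∈ Set.range g ↔ ¬ ∃ i, m i = some j)
    (hCC : (I17 nb1 nb2 K).CourseComplete (caMatching nb1 m g)) :
    (I17 nb1 nb2 K).PairSizeStable noF (caMatching nb1 m g) := by
  rintro (⟨i, t⟩ | k) x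
  · fin_cases t
    · exact not_sizeBlockingPair_s0 hCC
    · exact not_sizeBlockingPair_s1 hm.1.1 hCC
    · exact not_sizeBlockingPair_s2 hm hrange hCC
  · exact not_sizeBlockingPair_p hg hCC

theorem exists_complete_pairSizeStable_of_maximal (hK1 : K ≤ n1) (hK2 : K ≤ n2)
    (hm : GMaximal nb1 nb2 m) (hsize : GSize m = K) :
    ∃ M : Finset (S17 n1 n2 K × C17 n1 n2), (I17 nb1 nb2 K).IsMatching M ∧
      (I17 nb1 nb2 K).StudentComplete M ∧ (I17 nb1 nb2 K).CourseComplete M ∧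
      (I17 nb1 nb2 K).PairSizeStable noF M := by
  set U := univ.filter fun j : Fin n1 => ¬ ∃ i, m i = some j
  have hU : #U = n1 - K := by
    have := card_filter_add_card_filter_not (s := univ) fun j : Fin n1 => ∃ i, m i = some j
    rw [card_filter_exists_eq_some hm.1.2, hsize, card_univ, Fintype.card_fin] at this
    exact Nat.eq_sub_of_add_eq' this
  set g := U.orderEmbOfFin hU
  have hrange (j : Fin n1) : j ∈ Set.range g ↔ ¬ ∃ i, m i = some j := by
    simp [g, U]
  have hCC := courseComplete_caMatching (nb1 := nb1) (nb2 := nb2) hK1 hK2 hsize hrange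
  exact ⟨caMatching nb1 m g, isMatching_caMatching hm.1.1 hCC, studentComplete_caMatching, hCC,
    pairSizeStable_caMatching hm g.strictMono hrange hCC⟩

end Forward


section Backward

variable {M : Finset (S17 n1 n2 K × C17 n1 n2)}

lemma CM_s0_cases (hM : (I17 nb1 nb2 K).IsMatching M) (hSC : (I17 nb1 nb2 K).StudentComplete M) :
    CM M (s i 0) = {d i 0} ∨ CM M (s i 0) = {c (nb1 i), f} := by
  have hacc (x) (hx : x ∈ CM M (s i 0)) : x = d i 0 ∨ x = c (nb1 i) ∨ x = f :=
    acc_s0.1 (hM.1 _ (mem_CM.1 hx))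
  by_cases hd : d i 0 ∈ CM M (s i 0)
  · exact .inl ((I17 nb1 nb2 K).eq_of_subset_of_O_le (singleton_subset_iff.2 hd)
      (by simp [hSC (s i 0)])).symm
  · refine .inr ((I17 nb1 nb2 K).eq_of_subset_of_O_le (fun x hx => ?_) (by simp [hSC (s i 0)]))
    rcases hacc x hx with rfl | rfl | rfl
    · exact absurd hx hd
    all_goals simp

lemma CM_s1_cases (hM : (I17 nb1 nb2 K).IsMatching M) (hSC : (I17 nb1 nb2 K).StudentComplete M) :
    CM M (s i 1) = {d i 0} ∨ CM M (s i 1) = {d i 1} ∨ CM M (s i 1) = {c (nb2 i), f} := by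
  have hacc (x) (hx : x ∈ CM M (s i 1)) :
      x = d i 0 ∨ x = d i 1 ∨ x = c (nb2 i) ∨ x = f := acc_s1.1 (hM.1 _ (mem_CM.1 hx))
  by_cases hd0 : d i 0 ∈ CM M (s i 1)
  · exact .inl ((I17 nb1 nb2 K).eq_of_subset_of_O_le (singleton_subset_iff.2 hd0)
      (by simp [hSC (s i 1)])).symm
  by_cases hd1 : d i 1 ∈ CM M (s i 1)
  · exact .inr <| .inl ((I17 nb1 nb2 K).eq_of_subset_of_O_le (singleton_subset_iff.2 hd1)
      (by simp [hSC (s i 1)])).symm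
  · refine .inr <| .inr ((I17 nb1 nb2 K).eq_of_subset_of_O_le (fun x hx => ?_)
      (by simp [hSC (s i 1)]))
    rcases hacc x hx with rfl | rfl | rfl | rfl
    · exact absurd hx hd0
    · exact absurd hx hd1
    all_goals simp

lemma gadget_cases (hM : (I17 nb1 nb2 K).IsMatching M) (hSC : (I17 nb1 nb2 K).StudentComplete M)
    (hCC : (I17 nb1 nb2 K).CourseComplete M) (i : Fin n2) :
    (CM M (s i 0) = {c (nb1 i), f} ∧ CM M (s i 1) = {d i 0} ∧ CM M (s i 2) = {d i 1}) ∨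
    (CM M (s i 0) = {d i 0} ∧ CM M (s i 1) = {c (nb2 i), f} ∧ CM M (s i 2) = {d i 1}) ∨
    (CM M (s i 0) = {d i 0} ∧ CM M (s i 1) = {d i 1} ∧ d i 1 ∉ CM M (s i 2)) := by
  obtain ⟨a₀, ha₀⟩ := hCC.exists_mem (x := d i 0) (by simp)
  obtain ⟨a₁, ha₁⟩ := hCC.exists_mem (x := d i 1) (by simp)
  have hd0 : d i 0 ∈ CM M (s i 0) ∨ d i 0 ∈ CM M (s i 1) := by
    rcases acc_d0.1 (hM.1 _ ha₀) with rfl | rfl <;> simp [ha₀]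
  have hs2 (h : d i 1 ∉ CM M (s i 1)) : CM M (s i 2) = {d i 1} := by
    rcases acc_d1.1 (hM.1 _ ha₁) with rfl | rfl
    · exact absurd (mem_CM.2 ha₁) h
    · exact ((I17 nb1 nb2 K).eq_of_subset_of_O_le (singleton_subset_iff.2 (mem_CM.2 ha₁))
        (by simp [hSC (s i 2)])).symm
  have hunique (r : Fin 2) {t t' : Fin 3} (h : d i r ∈ CM M (s i t))
      (h' : d i r ∈ CM M (s i t')) : t = t' := by
    simpa using hM.eq_of_mem_of_quota_le_one (by simp) (mem_CM.1 h) (mem_CM.1 h')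
  rcases CM_s0_cases (i := i) hM hSC with h0 | h0 <;>
    rcases CM_s1_cases (i := i) hM hSC with h1 | h1 | h1
  · exact absurd (hunique 0 (t := 0) (t' := 1) (by simp [h0]) (by simp [h1])) (by decide)
  · refine .inr <| .inr ⟨h0, h1, fun h2 => ?_⟩
    exact absurd (hunique 1 (t := 1) (by simp [h1]) h2) (by decide)
  · exact .inr <| .inl ⟨h0, h1, hs2 (by simp [h1])⟩
  · exact .inl ⟨h0, h1, hs2 (by simp [h1])⟩
  all_goals simp [h0, h1] at hd0

variable (nb1 nb2 M) in
def graphMatching : Fin n2 → Option (Fin n1) := fun i =>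
  if (s i 0, c (nb1 i)) ∈ M then some (nb1 i)
  else if (s i 1, c (nb2 i)) ∈ M then some (nb2 i) else none

lemma graphMatching_cases (hM : (I17 nb1 nb2 K).IsMatching M)
    (hSC : (I17 nb1 nb2 K).StudentComplete M) (hCC : (I17 nb1 nb2 K).CourseComplete M)
    (i : Fin n2) :
    (graphMatching nb1 nb2 M i = some (nb1 i) ∧ CM M (s i 0) = {c (nb1 i), f} ∧
      CM M (s i 1) = {d i 0} ∧ CM M (s i 2) = {d i 1}) ∨
    (graphMatching nb1 nb2 M i = some (nb2 i) ∧ CM M (s i 0) = {d i 0} ∧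
      CM M (s i 1) = {c (nb2 i), f} ∧ CM M (s i 2) = {d i 1}) ∨
    (graphMatching nb1 nb2 M i = none ∧ CM M (s i 0) = {d i 0} ∧
      CM M (s i 1) = {d i 1} ∧ d i 1 ∉ CM M (s i 2)) := by
  rcases gadget_cases hM hSC hCC i with h | h | h
  · exact .inl ⟨by simp [graphMatching, ← mem_CM, h.1], h⟩
  · exact .inr <| .inl ⟨by simp [graphMatching, ← mem_CM, h.1, h.2.1], h⟩
  · exact .inr <| .inr ⟨by simp [graphMatching, ← mem_CM, h.1, h.2.1], h⟩

lemma graphMatching_adj {j : Fin n1} (h : graphMatching nb1 nb2 M i = some j) :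
    j = nb1 i ∨ j = nb2 i := by
  unfold graphMatching at h
  split_ifs at h <;> simp_all [eq_comm]

lemma mem_of_graphMatching_eq_some {j : Fin n1} (h : graphMatching nb1 nb2 M i = some j) :
    (s i 0, c j) ∈ M ∨ (s i 1, c j) ∈ M := by
  unfold graphMatching at h
  split_ifs at h with h0 h1 <;> cases h
  exacts [.inl h0, .inr h1]

lemma graphMatching_eq_some_of_mem (hM : (I17 nb1 nb2 K).IsMatching M)
    (hSC : (I17 nb1 nb2 K).StudentComplete M) (hCC : (I17 nb1 nb2 K).CourseComplete M)
    {t : Fin 3} (ht : t ≠ 2) {j : Fin n1} (h : (s i t, c j) ∈ M) :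
    graphMatching nb1 nb2 M i = some j := by
  rw [← mem_CM] at h
  rcases graphMatching_cases hM hSC hCC i with
    ⟨hg, h0, h1, -⟩ | ⟨hg, h0, h1, -⟩ | ⟨hg, h0, h1, -⟩ <;> fin_cases t <;> simp_all

lemma graphMatching_injective (hM : (I17 nb1 nb2 K).IsMatching M) {i i' : Fin n2} {j : Fin n1}
    (h : graphMatching nb1 nb2 M i = some j) (h' : graphMatching nb1 nb2 M i' = some j) :
    i = i' := by
  rcases mem_of_graphMatching_eq_some h with h | h <;>
    rcases mem_of_graphMatching_eq_some h' with h' | h' <;>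
    simpa using hM.eq_of_mem_of_quota_le_one (by simp) h h'

lemma SM_f_eq (hM : (I17 nb1 nb2 K).IsMatching M) (hSC : (I17 nb1 nb2 K).StudentComplete M)
    (hCC : (I17 nb1 nb2 K).CourseComplete M) :
    SM M f = (univ.filter fun i => graphMatching nb1 nb2 M i ≠ none).image
      fun i => if (s i 0, f) ∈ M then s i 0 else s i 1 := by
  ext a
  simp only [mem_SM, mem_image, mem_filter, mem_univ, true_and]
  constructor
  · intro ha
    obtain ⟨i, rfl | rfl⟩ := acc_f.1 (hM.1 _ ha) <;> refine ⟨i, ?_⟩ <;>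
      simp only [← mem_CM] at ha ⊢ <;>
      rcases graphMatching_cases hM hSC hCC i with
        ⟨hg, h0, h1, -⟩ | ⟨hg, h0, h1, -⟩ | ⟨hg, h0, h1, -⟩ <;> simp_all
  · rintro ⟨i, hi, rfl⟩
    rcases graphMatching_cases hM hSC hCC i with
      ⟨hg, h0, h1, -⟩ | ⟨hg, h0, h1, -⟩ | ⟨hg, h0, h1, -⟩ <;> simp_all [← mem_CM]

lemma gSize_graphMatching (hM : (I17 nb1 nb2 K).IsMatching M)
    (hSC : (I17 nb1 nb2 K).StudentComplete M) (hCC : (I17 nb1 nb2 K).CourseComplete M) :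
    GSize (graphMatching nb1 nb2 M) = K := by
  have := hCC f
  rwa [SM_f_eq hM hSC hCC, card_image_of_injective _ fun i i' h => ?_] at this
  split_ifs at h <;> exact (Prod.ext_iff.1 (Sum.inl_injective h)).1

lemma CM_s2_eq_of_graphMatching_eq_none (hM : (I17 nb1 nb2 K).IsMatching M)
    (hSC : (I17 nb1 nb2 K).StudentComplete M) (hCC : (I17 nb1 nb2 K).CourseComplete M)
    (hi : graphMatching nb1 nb2 M i = none) : CM M (s i 2) = {e₁, e₂} := by
  -- the `n2 - K` seats of `e₁` (and of `e₂`) can only go to the `n2 - K` unmatched `s i' 2`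
  have hmem (x : C17 n1 n2) (hx : x = e₁ ∨ x = e₂) : x ∈ CM M (s i 2) := by
    have hsub : SM M x ⊆ (univ.filter fun i => graphMatching nb1 nb2 M i = none).image
        fun i => s i 2 := by
      intro a ha
      obtain ⟨i', rfl⟩ : ∃ i', a = s i' 2 := by
        rcases hx with rfl | rfl
        exacts [acc_e₁.1 (hM.1 _ (mem_SM.1 ha)), acc_e₂.1 (hM.1 _ (mem_SM.1 ha))]
      refine mem_image_of_mem _ (mem_filter.2 ⟨mem_univ _, ?_⟩)
      rw [mem_SM, ← mem_CM] at ha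
      rcases graphMatching_cases hM hSC hCC i' with
        ⟨-, -, -, h2⟩ | ⟨-, -, -, h2⟩ | ⟨hg, -⟩
      · rcases hx with rfl | rfl <;> simp [h2] at ha
      · rcases hx with rfl | rfl <;> simp [h2] at ha
      · exact hg
    have heq := eq_of_subset_of_card_le hsub (by
      rw [hCC x, card_image_of_injective _ fun i i' h => by simpa using h, card_filter_eq_none,
        gSize_graphMatching hM hSC hCC]
      rcases hx with rfl | rfl <;> simp)
    exact mem_CM.2 (mem_SM.1 (heq ▸ mem_image_of_mem _ (by simp [hi])))
  exact ((I17 nb1 nb2 K).eq_of_subset_of_O_le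
    (insert_subset_iff.2 ⟨hmem _ (.inl rfl), singleton_subset_iff.2 (hmem _ (.inr rfl))⟩)
    (by simp [hSC (s i 2)])).symm

lemma s2_c_notMem (hM : (I17 nb1 nb2 K).IsMatching M) (hSC : (I17 nb1 nb2 K).StudentComplete M)
    (hCC : (I17 nb1 nb2 K).CourseComplete M) (j : Fin n1) : (s i 2, c j) ∉ M := by
  rw [← mem_CM]
  rcases graphMatching_cases hM hSC hCC i with ⟨-, -, -, h2⟩ | ⟨-, -, -, h2⟩ | ⟨hg, -⟩
  · simp [h2]
  · simp [h2]
  · simp [CM_s2_eq_of_graphMatching_eq_none hM hSC hCC hg]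

lemma graphMatching_maximal (hM : (I17 nb1 nb2 K).IsMatching M)
    (hSC : (I17 nb1 nb2 K).StudentComplete M) (hCC : (I17 nb1 nb2 K).CourseComplete M)
    (hstable : (I17 nb1 nb2 K).PairSizeStable noF M) (hi : graphMatching nb1 nb2 M i = none)
    {j : Fin n1} (hj : j = nb1 i ∨ j = nb2 i) : ∃ i', graphMatching nb1 nb2 M i' = some j := by
  by_contra hunmatched
  obtain ⟨a, ha⟩ := hCC.exists_mem (x := c j) (by simp)
  rcases acc_c.1 (hM.1 _ ha) with
    ⟨i', rfl, -⟩ | ⟨i', rfl, -⟩ | ⟨i', rfl, -⟩ | ⟨k, rfl⟩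
  · exact hunmatched ⟨i', graphMatching_eq_some_of_mem hM hSC hCC (by decide) ha⟩
  · exact hunmatched ⟨i', graphMatching_eq_some_of_mem hM hSC hCC (by decide) ha⟩
  · exact s2_c_notMem hM hSC hCC j ha
  · -- `s i 2` would trade `e₂` for `c j`, which prefers her to its occupant `p k`
    have hacc : acc17 nb1 nb2 (s i 2 : S17 n1 n2 K) (c j) := acc_s2.2 (by tauto)
    refine hstable (s i 2) (c j) (((I17 nb1 nb2 K).sizeBlockingPair_noF_iff hSC hCC).2
      ⟨hacc, s2_c_notMem hM hSC hCC j,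
        ⟨p k, mem_SM.2 ha, hacc, acc_p.2 ⟨j, rfl⟩, .inl ?_⟩,
        {e₂}, by simp [CM_s2_eq_of_graphMatching_eq_none hM hSC hCC hi], ?_, by simp⟩)
    · show mrank17 (s i 2) < mrank17 (p k)
      rw [mrank_s_two, mrank_p]
      omega
    · simp only [mem_singleton, forall_eq]
      exact ⟨hacc, acc_s2.2 (by simp), .inl (by simp only [srank17]; split_ifs <;> omega)⟩

theorem exists_maximal_of_complete_pairSizeStable (hM : (I17 nb1 nb2 K).IsMatching M)
    (hSC : (I17 nb1 nb2 K).StudentComplete M) (hCC : (I17 nb1 nb2 K).CourseComplete M)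
    (hstable : (I17 nb1 nb2 K).PairSizeStable noF M) :
    ∃ m, GMaximal nb1 nb2 m ∧ GSize m = K :=
  ⟨graphMatching nb1 nb2 M,
    ⟨⟨fun _ _ => graphMatching_adj, fun _ _ _ => graphMatching_injective hM⟩,
      fun _ hi _ hj => graphMatching_maximal hM hSC hCC hstable hi hj⟩,
    gSize_graphMatching hM hSC hCC⟩

end Backward

end I17

theorem maximalMatching_eq_iff_complete_pairSizeStable_general
    {n1 n2 : ℕ} (nb1 nb2 : Fin n2 → Fin n1)
    (K : ℕ) (hK1 : K ≤ n1) (hK2 : K ≤ n2) :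
    ((∃ f, GMaximal nb1 nb2 f ∧ GSize f = K) ↔
      ∃ M : Finset (S17 n1 n2 K × C17 n1 n2),
        (I17 nb1 nb2 K).IsMatching M ∧ (I17 nb1 nb2 K).StudentComplete M ∧
        (I17 nb1 nb2 K).PairSizeStable noF M) ∧
    ((∃ f, GMaximal nb1 nb2 f ∧ GSize f = K) ↔
      ∃ M : Finset (S17 n1 n2 K × C17 n1 n2),
        (I17 nb1 nb2 K).IsMatching M ∧ (I17 nb1 nb2 K).CourseComplete M ∧
        (I17 nb1 nb2 K).PairSizeStable noF M) := by
  have hcomplete {M : Finset (S17 n1 n2 K × C17 n1 n2)} (hM : (I17 nb1 nb2 K).IsMatching M) :=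
    (I17 nb1 nb2 K).studentComplete_iff_courseComplete
      (I17.sum_limit_eq_sum_quota_mul_credits hK1 hK2) hM
  refine ⟨⟨?_, ?_⟩, ⟨?_, ?_⟩⟩
  · rintro ⟨m, hm, hsize⟩
    obtain ⟨M, hM, hSC, -, hstable⟩ :=
      I17.exists_complete_pairSizeStable_of_maximal hK1 hK2 hm hsize
    exact ⟨M, hM, hSC, hstable⟩
  · rintro ⟨M, hM, hSC, hstable⟩
    exact I17.exists_maximal_of_complete_pairSizeStable hM hSC ((hcomplete hM).1 hSC) hstable
  · rintro ⟨m, hm, hsize⟩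
    obtain ⟨M, hM, -, hCC, hstable⟩ :=
      I17.exists_complete_pairSizeStable_of_maximal hK1 hK2 hm hsize
    exact ⟨M, hM, hCC, hstable⟩
  · rintro ⟨M, hM, hCC, hstable⟩
    exact I17.exists_maximal_of_complete_pairSizeStable hM ((hcomplete hM).2 hCC) hCC hstable

/-- `G` has a maximal matching of size exactly `K` iff `I17(G,K)`
admits a student-complete pair-size-stable matching, and likewise iff `I17(G,K)`
admits a course-complete pair-size-stable matching. -/
theorem maximalMatching_eq_iff_complete_pairSizeStable
    {n1 n2 : ℕ} (nb1 nb2 : Fin n2 → Fin n1) (hnb : ∀ i, nb1 i < nb2 i)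
    (K : ℕ) (hK1 : K ≤ n1) (hK2 : K ≤ n2) :
    ((∃ f, GMaximal nb1 nb2 f ∧ GSize f = K) ↔
      ∃ M : Finset (S17 n1 n2 K × C17 n1 n2),
        (I17 nb1 nb2 K).IsMatching M ∧ (I17 nb1 nb2 K).StudentComplete M ∧
        (I17 nb1 nb2 K).PairSizeStable noF M) ∧
    ((∃ f, GMaximal nb1 nb2 f ∧ GSize f = K) ↔
      ∃ M : Finset (S17 n1 n2 K × C17 n1 n2),
        (I17 nb1 nb2 K).IsMatching M ∧ (I17 nb1 nb2 K).CourseComplete M ∧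
        (I17 nb1 nb2 K).PairSizeStable noF M) :=
  maximalMatching_eq_iff_complete_pairSizeStable_general nb1 nb2 K hK1 hK2
end

section
/- With I(G,K) the CA-ML instance constructed from a bipartite graph G and integer K as described (the exact-maximal-matching construction), a matching in I(G,K) is course-complete if and only if it is student-complete. -/
open Finset

/-!
Count the credits of a matching `M` twice: summed over students it is `∑ₛ O(C_M(s))`, summed
over courses it is `∑_c O(c)·|S_M(c)|`. Each summand is bounded by `T(s)`, resp. `O(c)·q⁺(c)`,
and in `I(G,K)` the two bounds have the same total `6 n2 + n1 - K`. Hence all student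
inequalities are tight iff the common sum attains that total iff all course inequalities are.
-/

section DoubleCounting

variable {S C : Type*} [DecidableEq S] [DecidableEq C]

theorem CA.O_CM_eq_sum_filter (I : CA S C) (M : Finset (S × C)) (s : S) :
    I.O (CM M s) = ∑ p ∈ M with p.1 = s, I.credits p.2 := by
  rw [CA.O, CM, sum_image]
  intro p hp q hq h
  exact Prod.ext ((mem_filter.1 hp).2.trans (mem_filter.1 hq).2.symm) h

theorem card_SM_eq_card_filter (M : Finset (S × C)) (c : C) :
    #(SM M c) = #{p ∈ M | p.2 = c} := by
  refine card_image_of_injOn fun p hp q hq h => ?_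
  exact Prod.ext h ((mem_filter.1 hp).2.trans (mem_filter.1 hq).2.symm)

variable [Fintype S] [Fintype C]

theorem CA.sum_O_CM_eq_sum_credits_mul_card_SM (I : CA S C) (M : Finset (S × C)) :
    ∑ s, I.O (CM M s) = ∑ c, I.credits c * #(SM M c) := by
  have by_course (c : C) :
      I.credits c * #(SM M c) = ∑ p ∈ M with p.2 = c, I.credits p.2 := by
    rw [card_SM_eq_card_filter, mul_comm, ← nsmul_eq_mul, ← sum_const]
    exact sum_congr rfl fun p hp => by rw [(mem_filter.1 hp).2]
  simp_rw [CA.O_CM_eq_sum_filter, by_course]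
  rw [sum_fiberwise M Prod.fst, sum_fiberwise M Prod.snd]

theorem CA.courseComplete_iff_studentComplete_of_sum_limit_eq (I : CA S C)
    {M : Finset (S × C)} (hM : I.IsMatching M)
    (hsum : ∑ s, I.limit s = ∑ c, I.credits c * I.quota c) :
    I.CourseComplete M ↔ I.StudentComplete M := by
  obtain ⟨-, hlimit, hquota⟩ := hM
  have hcourse (c : C) : I.credits c * #(SM M c) ≤ I.credits c * I.quota c :=
    mul_le_mul_of_nonneg_left (by exact_mod_cast hquota c) (I.credits_pos c).le
  have hcourse_iff (c : C) :
      I.credits c * #(SM M c) = I.credits c * I.quota c ↔ #(SM M c) = I.quota c := by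
    rw [mul_right_inj' (I.credits_pos c).ne', Nat.cast_inj]
  calc I.CourseComplete M
      ↔ ∑ c, I.credits c * #(SM M c) = ∑ c, I.credits c * I.quota c := by
        simp only [sum_eq_sum_iff_of_le fun c _ => hcourse c, mem_univ, true_implies,
          hcourse_iff, CA.CourseComplete]
    _ ↔ ∑ s, I.O (CM M s) = ∑ s, I.limit s := by
        rw [I.sum_O_CM_eq_sum_credits_mul_card_SM, hsum]
    _ ↔ I.StudentComplete M := by
        simp only [sum_eq_sum_iff_of_le fun s _ => hlimit s, mem_univ, true_implies,
          CA.StudentComplete]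

end DoubleCounting

theorem I17_sum_limit_eq {n1 n2 : ℕ} (nb1 nb2 : Fin n2 → Fin n1) {K : ℕ}
    (hK1 : K ≤ n1) (hK2 : K ≤ n2) :
    ∑ s, (I17 nb1 nb2 K).limit s
      = ∑ c, (I17 nb1 nb2 K).credits c * (I17 nb1 nb2 K).quota c := by
  change ∑ s, limit17 s = ∑ c, credits17 c * (quota17 K c : ℚ)
  simp only [Fintype.sum_sum_type, limit17, credits17, quota17, Fin.sum_univ_three, sum_const,
    card_univ, Fintype.card_prod, Fintype.card_fin, nsmul_eq_mul, Nat.cast_mul, Nat.cast_ofNat,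
    Nat.cast_one, Nat.cast_ite, Nat.cast_sub hK1, Nat.cast_sub hK2, mul_one, one_mul, Fin.isValue,
    Fin.reduceEq, ↓reduceIte]
  ring

theorem I17_courseComplete_iff_studentComplete_general
    {n1 n2 : ℕ} (nb1 nb2 : Fin n2 → Fin n1)
    (K : ℕ) (hK1 : K ≤ n1) (hK2 : K ≤ n2)
    (M : Finset (S17 n1 n2 K × C17 n1 n2)) (hM : (I17 nb1 nb2 K).IsMatching M) :
    (I17 nb1 nb2 K).CourseComplete M ↔ (I17 nb1 nb2 K).StudentComplete M :=
  (I17 nb1 nb2 K).courseComplete_iff_studentComplete_of_sum_limit_eq hM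
    (I17_sum_limit_eq nb1 nb2 hK1 hK2)

/-- In the exact-maximal-matching instance `I17(G,K)`, a matching is
course-complete iff it is student-complete. -/
theorem I17_courseComplete_iff_studentComplete
    {n1 n2 : ℕ} (nb1 nb2 : Fin n2 → Fin n1) (hnb : ∀ i, nb1 i < nb2 i)
    (K : ℕ) (hK1 : K ≤ n1) (hK2 : K ≤ n2)
    (M : Finset (S17 n1 n2 K × C17 n1 n2)) (hM : (I17 nb1 nb2 K).IsMatching M) :
    (I17 nb1 nb2 K).CourseComplete M ↔ (I17 nb1 nb2 K).StudentComplete M :=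
  I17_courseComplete_iff_studentComplete_general nb1 nb2 K hK1 hK2 M hM
end
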